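/- Let H ≥ 1 be an integer, let X_1, …, X_H be independent random variables uniformly distributed on the unit circle {z ∈ ℂ : |z| = 1}, and set Z_H = X_1 + ⋯ + X_H. Then for all non-negative integers r and s, E[(Re Z_H)^{2r} (Im Z_H)^{2s}] ≤ (r+s)! · H^{r+s}. -/

import Mathlib

/-!
Since `(Re Z)² ≤ |Z|²` and `(Im Z)² ≤ |Z|²`, it suffices to bound `E|Z_H|^{2m}` for `m = r + s`.
Expanding `|Z_H|^{2m} = Z_H^m \bar Z_H^m` as a sum over pairs of tuples `(j, k) ∈ [H]^m × [H]^m`,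
independence and the orthogonality `E[X^a \bar X^b] = δ_{ab}` of a uniform point on the circle
leave exactly the pairs in which every index occurs as often in `j` as in `k`. Such a `k` is a
rearrangement `j ∘ σ` of `j`, so there are at most `m! H^m` of these pairs.
-/

open MeasureTheory ProbabilityTheory Complex Finset

/-- The uniform probability measure on the unit circle `{z ∈ ℂ : |z| = 1}`. -/
noncomputable def uniformCircle : Measure ℂ :=
  Measure.map (fun t : ℝ => Complex.exp (2 * Real.pi * t * Complex.I))
    (volume.restrict (Set.Icc 0 1))

open scoped ComplexConjugate

instance : IsProbabilityMeasure uniformCircle := by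
  have : IsProbabilityMeasure (volume.restrict (Set.Icc (0 : ℝ) 1)) := ⟨by simp⟩
  exact Measure.isProbabilityMeasure_map (by fun_prop)

lemma integral_uniformCircle_pow_mul_conj_pow (a b : ℕ) :
    ∫ z, z ^ a * conj z ^ b ∂uniformCircle = if a = b then 1 else 0 := by
  set n : ℤ := a - b
  have hexp : ∀ t : ℝ, exp (2 * Real.pi * t * I) ^ a * conj (exp (2 * Real.pi * t * I)) ^ b
      = exp (n * (2 * Real.pi * I) * t) := fun t => by
    rw [← exp_conj, ← exp_nat_mul, ← exp_nat_mul, ← exp_add]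
    congr 1
    simp only [n, map_mul, conj_I, conj_ofReal, map_ofNat, Int.cast_sub, Int.cast_natCast]
    ring
  rw [uniformCircle, integral_map (by fun_prop) (by fun_prop)]
  simp_rw [hexp]
  rw [integral_Icc_eq_integral_Ioc, ← intervalIntegral.integral_of_le zero_le_one]
  split_ifs with hab
  · simp [n, hab]
  · have hn : (n : ℂ) ≠ 0 := by simpa [n, sub_eq_zero] using hab
    rw [integral_exp_mul_complex (mul_ne_zero hn (by simp [Real.pi_ne_zero]))]
    simp [exp_int_mul_two_pi_mul_I]

section Combinatorics

variable {κ ι : Type*} [Fintype κ] [DecidableEq ι]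

def fiberCard (j : κ → ι) (l : ι) : ℕ := #{i | j i = l}

lemma prod_comp_eq_prod_pow_fiberCard [Fintype ι] {M : Type*} [CommMonoid M]
    (f : ι → M) (j : κ → ι) : ∏ i, f (j i) = ∏ l, f l ^ fiberCard j l := by
  rw [← Finset.prod_fiberwise' univ j f]
  simp [fiberCard]

lemma exists_perm_eq_comp_of_fiberCard_eq {j k : κ → ι} (h : fiberCard j = fiberCard k) :
    ∃ σ : Equiv.Perm κ, k = j ∘ σ := by
  have hcard : ∀ l, Fintype.card {i // k i = l} = Fintype.card {i // j i = l} := fun l => by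
    simpa [Fintype.card_subtype, fiberCard] using (congrFun h l).symm
  refine ⟨Equiv.ofFiberEquiv fun l => Fintype.equivOfCardEq (hcard l), funext fun i => ?_⟩
  exact (Equiv.ofFiberEquiv_map _ i).symm

variable (κ ι) [DecidableEq κ] [Fintype ι]

/-- The pairs counted by `B_m(H)` in the paper, for `κ = Fin m` and `ι = Fin H`. -/
def balancedPairs : Finset ((κ → ι) × (κ → ι)) := {p | fiberCard p.1 = fiberCard p.2}

lemma card_balancedPairs_le :
    #(balancedPairs κ ι) ≤ (Fintype.card κ).factorial * Fintype.card ι ^ Fintype.card κ := by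
  calc #(balancedPairs κ ι)
      ≤ #((univ : Finset ((κ → ι) × Equiv.Perm κ)).image fun q => (q.1, q.1 ∘ q.2)) := by
        refine card_le_card fun p hp => ?_
        obtain ⟨σ, hσ⟩ := exists_perm_eq_comp_of_fiberCard_eq (mem_filter.mp hp).2
        exact mem_image.mpr ⟨(p.1, σ), mem_univ _, Prod.ext rfl hσ.symm⟩
    _ ≤ #(univ : Finset ((κ → ι) × Equiv.Perm κ)) := card_image_le
    _ = (Fintype.card κ).factorial * Fintype.card ι ^ Fintype.card κ := by
        simp [Fintype.card_perm, mul_comm]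

end Combinatorics

lemma normSq_sum_pow_eq_sum_prod_fiberCard {ι : Type*} [Fintype ι] [DecidableEq ι]
    (z : ι → ℂ) (m : ℕ) :
    ((normSq (∑ l, z l) ^ m : ℝ) : ℂ) = ∑ p : (Fin m → ι) × (Fin m → ι),
      ∏ l, z l ^ fiberCard p.1 l * conj (z l) ^ fiberCard p.2 l := by
  rw [ofReal_pow, ← mul_conj, mul_pow, map_sum, Fintype.sum_pow, Fintype.sum_pow, sum_mul_sum,
    ← Fintype.sum_prod_type']
  refine sum_congr rfl fun p _ => ?_
  rw [prod_mul_distrib]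
  exact congrArg₂ (· * ·) (prod_comp_eq_prod_pow_fiberCard z p.1)
    (prod_comp_eq_prod_pow_fiberCard (fun l => conj (z l)) p.2)

lemma re_pow_mul_im_pow_le_normSq_pow (z : ℂ) (r s : ℕ) :
    z.re ^ (2 * r) * z.im ^ (2 * s) ≤ normSq z ^ (r + s) := by
  rw [pow_mul, pow_mul, pow_add]
  have hre : z.re ^ 2 ≤ normSq z := by rw [normSq_apply]; nlinarith [mul_self_nonneg z.im]
  have him : z.im ^ 2 ≤ normSq z := by rw [normSq_apply]; nlinarith [mul_self_nonneg z.re]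
  exact mul_le_mul (by gcongr) (by gcongr) (by positivity) (pow_nonneg (normSq_nonneg z) r)

section RandomModel

variable {Ω ι : Type*} [MeasurableSpace Ω] {μ : Measure Ω}

-- A map that is not a.e.-measurable pushes `μ` forward to `0`.
lemma aemeasurable_of_map_eq_uniformCircle {Y : Ω → ℂ} (hY : μ.map Y = uniformCircle) :
    AEMeasurable Y μ :=
  AEMeasurable.of_map_ne_zero (hY ▸ IsProbabilityMeasure.ne_zero _)

lemma ae_norm_eq_one_of_map_eq_uniformCircle {Y : Ω → ℂ} (hY : μ.map Y = uniformCircle) :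
    ∀ᵐ ω ∂μ, ‖Y ω‖ = 1 := by
  refine ae_of_ae_map (aemeasurable_of_map_eq_uniformCircle hY) (p := fun z => ‖z‖ = 1) ?_
  rw [hY, uniformCircle, ae_map_iff (by fun_prop)
    (isClosed_eq continuous_norm continuous_const).measurableSet]
  exact ae_of_all _ fun t => by simp [norm_exp]

variable [Fintype ι] {X : ι → Ω → ℂ}

lemma integrable_prod_pow_mul_conj_pow [IsFiniteMeasure μ]
    (hX : ∀ l, μ.map (X l) = uniformCircle) (a b : ι → ℕ) :
    Integrable (fun ω => ∏ l, X l ω ^ a l * conj (X l ω) ^ b l) μ := by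
  have hXm := fun l => aemeasurable_of_map_eq_uniformCircle (hX l)
  refine Integrable.of_bound (by fun_prop) 1 ?_
  filter_upwards [ae_all_iff.mpr fun l => ae_norm_eq_one_of_map_eq_uniformCircle (hX l)]
    with ω hω
  simp [hω]

lemma integral_prod_pow_mul_conj_pow (hindep : iIndepFun X μ)
    (hX : ∀ l, μ.map (X l) = uniformCircle) (a b : ι → ℕ) :
    ∫ ω, ∏ l, X l ω ^ a l * conj (X l ω) ^ b l ∂μ = if a = b then 1 else 0 := by
  have hXm := fun l => aemeasurable_of_map_eq_uniformCircle (hX l)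
  rw [hindep.integral_fun_prod_comp (f := fun l z => z ^ a l * conj z ^ b l) hXm
    fun l => by fun_prop]
  have hfactor : ∀ l, ∫ ω, X l ω ^ a l * conj (X l ω) ^ b l ∂μ = if a l = b l then 1 else 0 :=
    fun l => by
      rw [← integral_uniformCircle_pow_mul_conj_pow, ← hX l,
        integral_map (hXm l) (by fun_prop)]
  simp_rw [hfactor, Fintype.prod_boole, funext_iff]

variable [DecidableEq ι]

lemma integrable_normSq_sum_pow (hindep : iIndepFun X μ)
    (hX : ∀ l, μ.map (X l) = uniformCircle) (m : ℕ) :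
    Integrable (fun ω => normSq (∑ l, X l ω) ^ m) μ := by
  have := hindep.isProbabilityMeasure
  have hsum := integrable_finsetSum univ fun (p : (Fin m → ι) × (Fin m → ι)) _ =>
    integrable_prod_pow_mul_conj_pow hX (fiberCard p.1) (fiberCard p.2)
  refine hsum.re.congr (ae_of_all _ fun ω => ?_)
  simp only [← normSq_sum_pow_eq_sum_prod_fiberCard, RCLike.re_to_complex, ofReal_re]

lemma integral_normSq_sum_pow (hindep : iIndepFun X μ)
    (hX : ∀ l, μ.map (X l) = uniformCircle) (m : ℕ) :
    ∫ ω, normSq (∑ l, X l ω) ^ m ∂μ = #(balancedPairs (Fin m) ι) := by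
  have := hindep.isProbabilityMeasure
  apply ofReal_injective
  rw [← integral_complex_ofReal,
    integral_congr_ae (ae_of_all _ fun ω => normSq_sum_pow_eq_sum_prod_fiberCard _ m),
    integral_finsetSum _ fun p _ => integrable_prod_pow_mul_conj_pow hX _ _]
  simp_rw [integral_prod_pow_mul_conj_pow hindep hX, sum_boole, balancedPairs, ofReal_natCast]

end RandomModel

theorem random_model_even_moment_bound_general
    {Ω : Type*} [MeasurableSpace Ω] (μ : Measure Ω)
    (H : ℕ)
    (X : Fin H → Ω → ℂ)
    (hindep : iIndepFun X μ)
    (hunif : ∀ j, Measure.map (X j) μ = uniformCircle)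
    (r s : ℕ) :
    ∫ ω, ((∑ j, X j ω).re ^ (2 * r) * (∑ j, X j ω).im ^ (2 * s)) ∂μ
      ≤ ((r + s).factorial : ℝ) * (H : ℝ) ^ (r + s) := by
  calc ∫ ω, ((∑ j, X j ω).re ^ (2 * r) * (∑ j, X j ω).im ^ (2 * s)) ∂μ
      ≤ ∫ ω, normSq (∑ j, X j ω) ^ (r + s) ∂μ :=
        integral_mono_of_nonneg (ae_of_all _ fun ω =>
          mul_nonneg ((even_two_mul r).pow_nonneg _) ((even_two_mul s).pow_nonneg _))
          (integrable_normSq_sum_pow hindep hunif _)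
          (ae_of_all _ fun ω => re_pow_mul_im_pow_le_normSq_pow _ r s)
    _ = #(balancedPairs (Fin (r + s)) (Fin H)) := integral_normSq_sum_pow hindep hunif _
    _ ≤ ((r + s).factorial : ℝ) * (H : ℝ) ^ (r + s) := by
        exact_mod_cast (card_balancedPairs_le (Fin (r + s)) (Fin H)).trans_eq (by simp)

/-- The even-moment bound for the random model:
`E[(Re Z_H)^{2r} (Im Z_H)^{2s}] ≤ (r+s)! H^{r+s}`. -/
theorem random_model_even_moment_bound
    {Ω : Type*} [MeasurableSpace Ω] (μ : Measure Ω) [IsProbabilityMeasure μ]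
    (H : ℕ) (hH : 1 ≤ H)
    (X : Fin H → Ω → ℂ)
    (hmeas : ∀ j, Measurable (X j))
    (hindep : iIndepFun X μ)
    (hunif : ∀ j, Measure.map (X j) μ = uniformCircle)
    (r s : ℕ) :
    ∫ ω, ((∑ j, X j ω).re ^ (2 * r) * (∑ j, X j ω).im ^ (2 * s)) ∂μ
      ≤ ((r + s).factorial : ℝ) * (H : ℝ) ^ (r + s) :=
  random_model_even_moment_bound_general μ H X hindep hunif r s
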